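/- Let X = {P_1,...,P_s} ⊆ P^n be a set of s distinct K-rational points, K of characteristic zero, and let 2 ≤ m ≤ n+1. Then the degree-k homogeneous component of Ω^m_{R_X/K} vanishes for all k ≥ 2r_X + m, where r_X is the regularity index of R_X. Consequently the Hilbert polynomial of Ω^m_{R_X/K} is 0 for m ≥ 2. -/

import Mathlib

/-!
Since `HF_X(r) = s`, evaluation at the points maps the degree-`r` part of `R_X` isomorphically
onto `K^s`, which yields normal separators `f_a` of degree `r`, `f_a(P_b) = δ_ab`. As `f_a`
vanishes at every point other than `P_a`, `f_a (x_i - p_{a,i} x_0) ∈ I_X`, and the Leibniz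
rule turns this into `f_a² dx_i = p_{a,i} f_a² dx_0` in `Ω¹_{R_X/K}`. So after multiplication
by `f_a²` all the `dx_i` become proportional and every wedge of two of them dies. Finally, a
form `g` of degree `j ≥ 2r` is congruent to `∑_a g(P_a) x_0^(j-2r) f_a²` modulo `I_X`.
-/

open MvPolynomial

set_option maxHeartbeats 1000000
set_option synthInstance.maxHeartbeats 400000

noncomputable instance extAlgModK (K R M : Type) [CommRing K] [CommRing R] [Algebra K R]
    [AddCommGroup M] [Module R M] : Module K (ExteriorAlgebra R M) :=
  Module.compHom _ (algebraMap K R)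

/-- The homogeneous vanishing ideal of the `K`-rational point
`(1 : p_1 : ⋯ : p_n) ∈ ℙⁿ`. -/
noncomputable def pointIdeal (K : Type) [Field K] (n : ℕ) (p : Fin n → K) :
    Ideal (MvPolynomial (Fin (n + 1)) K) :=
  Ideal.span (Set.range fun i : Fin n =>
    MvPolynomial.X i.succ - MvPolynomial.C (p i) * MvPolynomial.X 0)

/-- The degree-`i` homogeneous component of the coordinate ring `R_X = S/I`. -/
noncomputable def coordPiece (K : Type) [Field K] (n : ℕ)
    (I : Ideal (MvPolynomial (Fin (n + 1)) K)) (i : ℕ) :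
    Submodule K (MvPolynomial (Fin (n + 1)) K ⧸ I) :=
  Submodule.span K {g | ∃ f : MvPolynomial (Fin (n + 1)) K,
    f.IsHomogeneous i ∧ g = Ideal.Quotient.mk I f}

/-- The homogeneous component of (total) degree `i` of `Ω^m_{R_X/K}`, realized
inside the exterior algebra over `R_X` of `Ω^1_{R_X/K}`. -/
noncomputable def omegaPiece (K : Type) [Field K] (n : ℕ)
    (I : Ideal (MvPolynomial (Fin (n + 1)) K)) (m i : ℕ) :
    Submodule K (ExteriorAlgebra (MvPolynomial (Fin (n + 1)) K ⧸ I)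
      (Ω[(MvPolynomial (Fin (n + 1)) K ⧸ I)⁄K])) :=
  Submodule.span K {w | ∃ (j : ℕ) (f : MvPolynomial (Fin (n + 1)) K)
      (σ : Fin m → Fin (n + 1)),
    i = j + m ∧ f.IsHomogeneous j ∧
    w = Ideal.Quotient.mk I f •
      ExteriorAlgebra.ιMulti (MvPolynomial (Fin (n + 1)) K ⧸ I) m
        (fun t => KaehlerDifferential.D K (MvPolynomial (Fin (n + 1)) K ⧸ I)
          (Ideal.Quotient.mk I (MvPolynomial.X (σ t))))}

namespace MvPolynomial.IsHomogeneous

theorem aeval_algebraMap_mul {σ R A : Type*} [CommSemiring R] [CommSemiring A] [Algebra R A]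
    {φ : MvPolynomial σ R} {d : ℕ} (hφ : φ.IsHomogeneous d) (v : σ → R) (y : A) :
    MvPolynomial.aeval (fun i => algebraMap R A (v i) * y) φ =
      algebraMap R A (eval v φ) * y ^ d := by
  conv_lhs => rw [φ.as_sum]
  conv_rhs => rw [φ.as_sum]
  rw [map_sum, map_sum, map_sum, Finset.sum_mul]
  refine Finset.sum_congr rfl fun u hu => ?_
  have hdeg : ∑ i ∈ u.support, u i = d := by
    simpa [Finsupp.weight_apply, Finsupp.sum] using hφ (mem_support_iff.mp hu)
  simp only [aeval_monomial, eval_monomial, Finsupp.prod, mul_pow, Finset.prod_mul_distrib,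
    Finset.prod_pow_eq_pow_sum, hdeg, map_mul, map_prod, map_pow]
  ring

end MvPolynomial.IsHomogeneous

theorem Derivation.mul_self_smul_eq_of_mul_eq {R A M : Type*} [CommSemiring R] [CommRing A]
    [Algebra R A] [AddCommGroup M] [Module A M] [Module R M] [IsScalarTower R A M]
    (D : Derivation R A M) {f u z : A} {c : R} (h : f * u = algebraMap R A c * (f * z)) :
    (f * f) • D u = algebraMap R A c • (f * f) • D z := by
  have hD : f • D u + u • D f = algebraMap R A c • (f • D z + z • D f) := by
    rw [← D.leibniz, h, D.leibniz, D.map_algebraMap, smul_zero, add_zero, D.leibniz]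
  linear_combination (norm := module) f • hD - h • D f

namespace ExteriorAlgebra

theorem smul_ι_mul_ι_mul_eq_zero {R M : Type*} [CommRing R] [AddCommGroup M] [Module R M]
    {g a b : R} {x y z : M} (hx : g • x = a • g • z) (hy : g • y = b • g • z)
    (T : ExteriorAlgebra R M) : g • (ι R x * (ι R y * T)) = 0 := by
  have hxy : g • (ι R x * ι R y) = 0 := calc
    g • (ι R x * ι R y) = ι R (g • x) * ι R y := by rw [map_smul, smul_mul_assoc]
    _ = a • (ι R z * ι R (g • y)) := by
        rw [hx, map_smul, map_smul, smul_mul_assoc, smul_mul_assoc, map_smul, mul_smul_comm]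
    _ = (a * b * g) • (ι R z * ι R z) := by
        rw [hy, map_smul, map_smul, mul_smul_comm, mul_smul_comm, smul_smul, smul_smul]
    _ = 0 := by rw [ι_sq_zero, smul_zero]
  rw [← mul_assoc, ← smul_mul_assoc, hxy, zero_mul]

end ExteriorAlgebra

section PointIdeal

variable {K : Type} [Field K] {n : ℕ}

theorem X_sub_C_mul_X_zero_mem_pointIdeal (pa : Fin n → K) (i : Fin (n + 1)) :
    X i - C (Matrix.vecCons 1 pa i) * X 0 ∈ pointIdeal K n pa := by
  induction i using Fin.cases with
  | zero => simp
  | succ i => exact Ideal.subset_span ⟨i, by simp⟩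

theorem eval_eq_zero_of_mem_pointIdeal {pa : Fin n → K} {h : MvPolynomial (Fin (n + 1)) K}
    (hh : h ∈ pointIdeal K n pa) : eval (Matrix.vecCons 1 pa) h = 0 := by
  have hle : pointIdeal K n pa ≤ RingHom.ker (eval (Matrix.vecCons 1 pa)) := by
    rw [pointIdeal, Ideal.span_le]
    rintro _ ⟨i, rfl⟩
    simp
  exact hle hh

theorem mem_pointIdeal_iff {pa : Fin n → K} {h : MvPolynomial (Fin (n + 1)) K} {d : ℕ}
    (hh : h.IsHomogeneous d) : h ∈ pointIdeal K n pa ↔ eval (Matrix.vecCons 1 pa) h = 0 := by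
  refine ⟨eval_eq_zero_of_mem_pointIdeal, fun heval => ?_⟩
  -- modulo the point ideal every `X i` equals `pa i • X 0`, so `h ≡ h(1, pa) • X 0 ^ d`
  have hsubst : (Ideal.Quotient.mkₐ K (pointIdeal K n pa)).comp
      (aeval fun i => algebraMap K _ (Matrix.vecCons 1 pa i) * X 0) =
      Ideal.Quotient.mkₐ K (pointIdeal K n pa) := by
    ext i
    simpa [← map_mul, Ideal.Quotient.eq, algebraMap_eq] using
      neg_mem (X_sub_C_mul_X_zero_mem_pointIdeal pa i)
  rw [← Ideal.Quotient.eq_zero_iff_mem, ← Ideal.Quotient.mkₐ_eq_mk K, ← hsubst,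
    AlgHom.comp_apply, hh.aeval_algebraMap_mul, heval]
  simp

theorem mem_iInf_pointIdeal_iff {s : ℕ} {p : Fin s → Fin n → K}
    {h : MvPolynomial (Fin (n + 1)) K} {d : ℕ} (hh : h.IsHomogeneous d) :
    h ∈ ⨅ b, pointIdeal K n (p b) ↔ ∀ b, eval (Matrix.vecCons 1 (p b)) h = 0 := by
  simp only [Ideal.mem_iInf, mem_pointIdeal_iff hh]

end PointIdeal

section Separator

variable {K : Type} [Field K] {n s : ℕ} {p : Fin s → Fin n → K}

local notation "I_X" => ⨅ b, pointIdeal K n (p b)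
local notation "R_X" => MvPolynomial (Fin (n + 1)) K ⧸ I_X

structure IsNormalSeparator (p : Fin s → Fin n → K) (a : Fin s) (d : ℕ)
    (f : MvPolynomial (Fin (n + 1)) K) : Prop where
  isHomogeneous : f.IsHomogeneous d
  eval_eq : ∀ b, eval (Matrix.vecCons 1 (p b)) f = if b = a then 1 else 0

namespace IsNormalSeparator

variable {a : Fin s} {d d' : ℕ} {f f' : MvPolynomial (Fin (n + 1)) K}

theorem mul (hf : IsNormalSeparator p a d f) (hf' : IsNormalSeparator p a d' f') :
    IsNormalSeparator p a (d + d') (f * f') where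
  isHomogeneous := hf.isHomogeneous.mul hf'.isHomogeneous
  eval_eq b := by rw [eval_mul, hf.eval_eq, hf'.eval_eq]; split_ifs <;> simp

theorem mul_X_sub_mem (hf : IsNormalSeparator p a d f) (i : Fin (n + 1)) :
    f * (X i - C (Matrix.vecCons 1 (p a) i) * X 0) ∈ I_X := by
  refine Ideal.mem_iInf.mpr fun b => ?_
  by_cases hba : b = a
  · subst hba
    exact Ideal.mul_mem_left _ _ (X_sub_C_mul_X_zero_mem_pointIdeal _ i)
  · refine Ideal.mul_mem_right _ _ ((mem_pointIdeal_iff hf.isHomogeneous).mpr ?_)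
    simp [hf.eval_eq, hba]

theorem mul_self_smul_D_X (hf : IsNormalSeparator p a d f) (i : Fin (n + 1)) :
    (Ideal.Quotient.mk I_X f * Ideal.Quotient.mk I_X f) •
        KaehlerDifferential.D K R_X (Ideal.Quotient.mk I_X (X i)) =
      algebraMap K R_X (Matrix.vecCons 1 (p a) i) •
        (Ideal.Quotient.mk I_X f * Ideal.Quotient.mk I_X f) •
          KaehlerDifferential.D K R_X (Ideal.Quotient.mk I_X (X 0)) := by
  refine Derivation.mul_self_smul_eq_of_mul_eq _ ?_
  have hrel := Ideal.Quotient.eq_zero_iff_mem.mpr (hf.mul_X_sub_mem i)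
  rw [map_mul, map_sub, map_mul, ← algebraMap_eq, Ideal.Quotient.mk_algebraMap] at hrel
  linear_combination hrel

theorem mul_self_smul_ιMulti_eq_zero (hf : IsNormalSeparator p a d f) {m : ℕ}
    (σ : Fin (m + 2) → Fin (n + 1)) :
    (Ideal.Quotient.mk I_X f * Ideal.Quotient.mk I_X f) •
      ExteriorAlgebra.ιMulti R_X (m + 2)
        (fun t => KaehlerDifferential.D K R_X (Ideal.Quotient.mk I_X (X (σ t)))) = 0 := by
  rw [ExteriorAlgebra.ιMulti_apply, List.ofFn_succ, List.ofFn_succ, List.prod_cons,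
    List.prod_cons]
  exact ExteriorAlgebra.smul_ι_mul_ι_mul_eq_zero (hf.mul_self_smul_D_X _)
    (hf.mul_self_smul_D_X _) _

end IsNormalSeparator

theorem mk_eq_mk_sum_eval_mul_separator {e : Fin s → MvPolynomial (Fin (n + 1)) K} {d j : ℕ}
    (he : ∀ a, IsNormalSeparator p a d (e a)) {g : MvPolynomial (Fin (n + 1)) K}
    (hg : g.IsHomogeneous j) (hdj : d ≤ j) :
    Ideal.Quotient.mk I_X g =
      Ideal.Quotient.mk I_X (∑ a, C (eval (Matrix.vecCons 1 (p a)) g) * X 0 ^ (j - d) * e a) := by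
  have hsum :
      (∑ a, C (eval (Matrix.vecCons 1 (p a)) g) * X 0 ^ (j - d) * e a).IsHomogeneous j := by
    refine IsHomogeneous.sum _ _ _ fun a _ => ?_
    simpa [Nat.sub_add_cancel hdj] using
      ((isHomogeneous_C _ _).mul (isHomogeneous_X_pow 0 (j - d))).mul (he a).isHomogeneous
  refine Ideal.Quotient.eq.mpr ((mem_iInf_pointIdeal_iff (hg.sub hsum)).mpr fun b => ?_)
  simp [(he _).eval_eq]

theorem coordPiece_eq_map (I : Ideal (MvPolynomial (Fin (n + 1)) K)) (i : ℕ) :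
    coordPiece K n I i =
      (homogeneousSubmodule (Fin (n + 1)) K i).map (Ideal.Quotient.mkₐ K I).toLinearMap := by
  rw [coordPiece, ← Submodule.span_eq (Submodule.map _ _), Submodule.map_coe]
  congr 1
  ext g
  simp [eq_comm]

theorem exists_isNormalSeparator {r : ℕ} (hr : Module.finrank K (coordPiece K n I_X r) = s)
    (a : Fin s) : ∃ f, IsNormalSeparator p a r f := by
  let ev : R_X →ₗ[K] Fin s → K := LinearMap.pi fun b =>
    (Ideal.Quotient.liftₐ I_X (aeval (Matrix.vecCons 1 (p b))) fun h hh => by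
      simpa using eval_eq_zero_of_mem_pointIdeal (Ideal.mem_iInf.mp hh b)).toLinearMap
  have ev_mk : ∀ h b, ev (Ideal.Quotient.mk I_X h) b = eval (Matrix.vecCons 1 (p b)) h :=
    fun _ _ => by simp [ev]
  have hinj : Function.Injective (ev.domRestrict (coordPiece K n I_X r)) := by
    refine (injective_iff_map_eq_zero _).mpr ?_
    rintro ⟨x, hx⟩ hev
    rw [coordPiece_eq_map] at hx
    obtain ⟨h, hh, rfl⟩ := hx
    have hI : h ∈ I_X := (mem_iInf_pointIdeal_iff hh).mpr fun b => by
      simpa [ev_mk] using congrFun hev b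
    simpa [Ideal.Quotient.eq_zero_iff_mem] using hI
  have : FiniteDimensional K (coordPiece K n I_X r) := .of_injective _ hinj
  obtain ⟨⟨x, hx⟩, hxa⟩ := (LinearMap.injective_iff_surjective_of_finrank_eq_finrank
    (by simp [hr])).mp hinj (Pi.single a 1)
  rw [coordPiece_eq_map] at hx
  obtain ⟨f, hf, rfl⟩ := hx
  exact ⟨f, hf, fun b => by simpa [ev_mk, Pi.single_apply] using congrFun hxa b⟩

theorem mk_smul_ιMulti_eq_zero {r j m : ℕ} (hr : Module.finrank K (coordPiece K n I_X r) = s)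
    {g : MvPolynomial (Fin (n + 1)) K} (hg : g.IsHomogeneous j) (hj : 2 * r ≤ j)
    (σ : Fin (m + 2) → Fin (n + 1)) :
    Ideal.Quotient.mk I_X g • ExteriorAlgebra.ιMulti R_X (m + 2)
      (fun t => KaehlerDifferential.D K R_X (Ideal.Quotient.mk I_X (X (σ t)))) = 0 := by
  choose f hf using exists_isNormalSeparator hr
  rw [mk_eq_mk_sum_eval_mul_separator (fun a => (hf a).mul (hf a)) hg (by omega), map_sum]
  -- `rw [Finset.sum_smul]` fails: the `Module` instance found is `extAlgModK`, whose `SMul` is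
  -- not syntactically the algebra's
  refine (Finset.sum_smul (R := R_X) (M := ExteriorAlgebra R_X Ω[R_X⁄K])).trans
    (Finset.sum_eq_zero fun a _ => ?_)
  rw [map_mul, mul_smul, map_mul _ (f a), (hf a).mul_self_smul_ιMulti_eq_zero, smul_zero]

end Separator

theorem omega_piece_vanishes_reduced_points_general (K : Type) [Field K]
    (n s : ℕ) (p : Fin s → Fin n → K)
    (I : Ideal (MvPolynomial (Fin (n + 1)) K))
    (hIdef : I = ⨅ j : Fin s, pointIdeal K n (p j))
    (r : ℕ) (hr : ∀ i : ℕ, r ≤ i → Module.finrank K (coordPiece K n I i) = s)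
    (m : ℕ) (hm : 2 ≤ m) :
    ∀ k : ℕ, 2 * r + m ≤ k → omegaPiece K n I m k = ⊥ := by
  subst hIdef
  obtain ⟨m, rfl⟩ : ∃ m', m = m' + 2 := ⟨m - 2, by omega⟩
  intro k hk
  rw [omegaPiece, Submodule.span_eq_bot]
  rintro w ⟨j, g, σ, rfl, hg, rfl⟩
  exact mk_smul_ιMulti_eq_zero (hr r le_rfl) hg (by omega) σ

/-- Let `X = {P_1, …, P_s} ⊆ ℙⁿ` be a set of `s` distinct `K`-rational points
(`char K = 0`), with vanishing ideal `I = ℘_1 ∩ ⋯ ∩ ℘_s` and regularity index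
`r = r_X` (so `HF_X(i) = s` for `i ≥ r`), and let `2 ≤ m ≤ n+1`.  Then the
degree-`k` homogeneous component of `Ω^m_{R_X/K}` vanishes for all
`k ≥ 2r_X + m`; consequently the Hilbert polynomial of `Ω^m_{R_X/K}` is `0`
for `m ≥ 2`. -/
theorem omega_piece_vanishes_reduced_points (K : Type) [Field K] [CharZero K]
    (n s : ℕ) (p : Fin s → Fin n → K) (hp : Function.Injective p)
    (I : Ideal (MvPolynomial (Fin (n + 1)) K))
    (hIdef : I = ⨅ j : Fin s, pointIdeal K n (p j))
    (r : ℕ) (hr : ∀ i : ℕ, r ≤ i → Module.finrank K (coordPiece K n I i) = s)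
    (m : ℕ) (hm : 2 ≤ m) (hmn : m ≤ n + 1) :
    ∀ k : ℕ, 2 * r + m ≤ k → omegaPiece K n I m k = ⊥ :=
  omega_piece_vanishes_reduced_points_general K n s p I hIdef r hr m hm
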